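/- arXiv:math/0007182 — 4 statements merged into one kernel-verified Lean document; each statement's English description precedes it below -/
import Mathlib

section
/- Let A be an associative unital ℂ-algebra and Δ : A → A ⊗ A a ℂ-algebra homomorphism. Let E, u, v, g, h ∈ A with g and h invertible, h² = g, u and v commuting with each other and with g and h, and suppose Δ(g) = g ⊗ g, Δ(u) = u ⊗ h + g ⊗ u, Δ(v) = v ⊗ h + g ⊗ v, and Δ(E) = E ⊗ 1 + 1 ⊗ E + 1 ⊗ (u v g⁻¹) − (u ⊗ v + v ⊗ u)(1 ⊗ h⁻¹) − g ⊗ (u v g⁻¹). Then the element E_B := E + u v g⁻¹ is primitive for Δ, i.e. Δ(E_B) = E_B ⊗ 1 + 1 ⊗ E_B. -/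
open scoped TensorProduct

/-- The deformed primitive carrier subspace: under the twisted coproduct
`Δ_{F_{B⊥}}`, the element `E_B = E + u v g⁻¹` is primitive. -/
theorem deformed_carrier_primitive
    {A : Type*} [Ring A] [Algebra ℂ A]
    (Δ : A →ₐ[ℂ] A ⊗[ℂ] A)
    (E u v g h gi hi : A)
    (hg : g * gi = 1) (hg' : gi * g = 1)
    (hh : h * hi = 1) (hh' : hi * h = 1)
    (hsq : h ^ 2 = g)
    (huv : u * v = v * u)
    (hug : u * g = g * u) (huh : u * h = h * u)
    (hvg : v * g = g * v) (hvh : v * h = h * v)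
    (hΔg : Δ g = g ⊗ₜ[ℂ] g)
    (hΔu : Δ u = u ⊗ₜ[ℂ] h + g ⊗ₜ[ℂ] u)
    (hΔv : Δ v = v ⊗ₜ[ℂ] h + g ⊗ₜ[ℂ] v)
    (hΔE : Δ E = E ⊗ₜ[ℂ] 1 + 1 ⊗ₜ[ℂ] E + 1 ⊗ₜ[ℂ] (u * v * gi)
        - (u ⊗ₜ[ℂ] v + v ⊗ₜ[ℂ] u) * (1 ⊗ₜ[ℂ] hi)
        - g ⊗ₜ[ℂ] (u * v * gi)) :
    Δ (E + u * v * gi)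
      = (E + u * v * gi) ⊗ₜ[ℂ] 1 + 1 ⊗ₜ[ℂ] (E + u * v * gi) := by
  -- h commutes with g, hence with gi; hi = h * gi
  have hgh : h * g = g * h := by rw [← hsq, ← pow_succ', pow_succ]
  have comm_gi : ∀ x : A, x * g = g * x → x * gi = gi * x := by
    intro x hx
    calc x * gi = gi * g * (x * gi) := by rw [hg', one_mul]
      _ = gi * (g * x * gi) := by simp [mul_assoc]
      _ = gi * (x * g * gi) := by rw [hx]
      _ = gi * (x * (g * gi)) := by rw [mul_assoc]
      _ = gi * x := by rw [hg, mul_one]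
  have hgiu : u * gi = gi * u := comm_gi u hug
  have hgiv : v * gi = gi * v := comm_gi v hvg
  have hgih : h * gi = gi * h := comm_gi h hgh
  have hhgi : h * gi = hi := by
    have h1 : h * (h * gi) = 1 := by
      rw [← mul_assoc, ← sq, hsq, hg]
    calc h * gi = (hi * h) * (h * gi) := by rw [hh', one_mul]
      _ = hi * (h * (h * gi)) := by rw [mul_assoc]
      _ = hi := by rw [h1, mul_one]
  -- Δ gi = gi ⊗ gi by uniqueness of inverses
  have hΔgi : Δ gi = gi ⊗ₜ[ℂ] gi := by
    have h1 : (gi ⊗ₜ[ℂ] gi) * Δ g = 1 := by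
      rw [hΔg, Algebra.TensorProduct.tmul_mul_tmul, hg', Algebra.TensorProduct.one_def]
    have h2 : Δ g * Δ gi = 1 := by rw [← map_mul, hg, map_one]
    calc Δ gi = ((gi ⊗ₜ[ℂ] gi) * Δ g) * Δ gi := by rw [h1, one_mul]
      _ = (gi ⊗ₜ[ℂ] gi) * (Δ g * Δ gi) := by rw [mul_assoc]
      _ = gi ⊗ₜ[ℂ] gi := by rw [h2, mul_one]
  have key : Δ (u * v * gi)
      = (u * v * gi) ⊗ₜ[ℂ] 1 + u ⊗ₜ[ℂ] (v * hi) + v ⊗ₜ[ℂ] (u * hi)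
        + g ⊗ₜ[ℂ] (u * v * gi) := by
    rw [map_mul, map_mul, hΔu, hΔv, hΔgi]
    simp only [add_mul, mul_add, Algebra.TensorProduct.tmul_mul_tmul]
    have e1 : h * h * gi = 1 := by rw [← sq, hsq, hg]
    have e2 : u * g * gi = u := by rw [mul_assoc, hg, mul_one]
    have e3 : h * v * gi = v * hi := by rw [← hvh, mul_assoc, ← hhgi, ← mul_assoc, hvh, mul_assoc]
    have e4 : g * v * gi = v := by rw [← hvg, mul_assoc, hg, mul_one]
    have e5 : u * h * gi = u * hi := by rw [mul_assoc, hhgi]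
    have e6 : g * g * gi = g := by rw [mul_assoc, hg, mul_one]
    rw [e1, e2, e3, e4, e5, e6]
    abel
  rw [map_add, hΔE, key]
  simp only [add_mul, mul_one, one_mul, Algebra.TensorProduct.tmul_mul_tmul,
    TensorProduct.add_tmul, TensorProduct.tmul_add]
  abel
end

section
/- Let A be an associative unital ℂ-algebra and Δ : A → A ⊗ A a ℂ-algebra homomorphism. Let u, v, g, h ∈ A with g and h invertible, h² = g, u and v commuting with each other and with g and h, and suppose Δ(g) = g ⊗ g, Δ(u) = u ⊗ h + g ⊗ u, Δ(v) = v ⊗ h + g ⊗ v. Then Δ(u v g⁻¹) = (u v g⁻¹) ⊗ 1 + u ⊗ (v h⁻¹) + v ⊗ (u h⁻¹) + g ⊗ (u v g⁻¹). -/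
open scoped TensorProduct

/-- Auxiliary coproduct computation for the correction term `u v g⁻¹` in the
deformed primitive element `E_B`. -/
theorem coproduct_of_correction_term
    {A : Type*} [Ring A] [Algebra ℂ A]
    (Δ : A →ₐ[ℂ] A ⊗[ℂ] A)
    (u v g h gi hi : A)
    (hg : g * gi = 1) (hg' : gi * g = 1)
    (hh : h * hi = 1) (hh' : hi * h = 1)
    (hsq : h ^ 2 = g)
    (huv : u * v = v * u)
    (hug : u * g = g * u) (huh : u * h = h * u)
    (hvg : v * g = g * v) (hvh : v * h = h * v)
    (hΔg : Δ g = g ⊗ₜ[ℂ] g)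
    (hΔu : Δ u = u ⊗ₜ[ℂ] h + g ⊗ₜ[ℂ] u)
    (hΔv : Δ v = v ⊗ₜ[ℂ] h + g ⊗ₜ[ℂ] v) :
    Δ (u * v * gi)
      = (u * v * gi) ⊗ₜ[ℂ] 1 + u ⊗ₜ[ℂ] (v * hi) + v ⊗ₜ[ℂ] (u * hi)
        + g ⊗ₜ[ℂ] (u * v * gi) := by
  have hgi : gi = hi * hi := by
    have key : g * (hi * hi) = 1 := by
      rw [← hsq, pow_two, mul_assoc, ← mul_assoc h hi hi, hh, one_mul, hh]
    calc gi = gi * (g * (hi * hi)) := by rw [key, mul_one]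
      _ = (gi * g) * (hi * hi) := by rw [mul_assoc]
      _ = hi * hi := by rw [hg', one_mul]
  have hΔgi : Δ gi = gi ⊗ₜ[ℂ] gi := by
    have h1 : Δ gi * Δ g = 1 := by rw [← map_mul, hg', map_one]
    have h2 : Δ g * (gi ⊗ₜ[ℂ] gi) = 1 := by
      rw [hΔg, Algebra.TensorProduct.tmul_mul_tmul, hg, Algebra.TensorProduct.one_def]
    calc Δ gi = Δ gi * (Δ g * (gi ⊗ₜ[ℂ] gi)) := by rw [h2, mul_one]
      _ = (Δ gi * Δ g) * (gi ⊗ₜ[ℂ] gi) := (mul_assoc _ _ _).symm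
      _ = gi ⊗ₜ[ℂ] gi := by rw [h1, one_mul]
  have e1 : h * h * gi = 1 := by rw [← pow_two, hsq, hg]
  have e2 : u * g * gi = u := by rw [mul_assoc, hg, mul_one]
  have e3 : h * v * gi = v * hi := by
    rw [← hvh, mul_assoc, hgi, ← mul_assoc h hi hi, hh, one_mul]
  have e4 : g * v * gi = v := by rw [← hvg, mul_assoc, hg, mul_one]
  have e5 : u * h * gi = u * hi := by
    rw [mul_assoc, hgi, ← mul_assoc h hi hi, hh, one_mul]
  have e6 : g * g * gi = g := by rw [mul_assoc, hg, mul_one]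
  rw [map_mul, map_mul, hΔu, hΔv, hΔgi]
  simp only [add_mul, mul_add, Algebra.TensorProduct.tmul_mul_tmul]
  rw [e1, e2, e3, e4, e5, e6]
  abel
end

section
/- Let A be an associative unital ℂ-algebra and Δ : A → A ⊗ A a ℂ-algebra homomorphism. Let E, v, g, h ∈ A with g and h invertible, h² = g, v commuting with g and h, and suppose Δ(g) = g ⊗ g, Δ(v) = v ⊗ h + g ⊗ v, and Δ(E) = E ⊗ 1 + 1 ⊗ E − v ⊗ (v h⁻¹) − (1/2)(g − 1) ⊗ (v² g⁻¹). Then the element E_{BO} := E + (1/2) v² g⁻¹ is primitive for Δ, i.e. Δ(E_{BO}) = E_{BO} ⊗ 1 + 1 ⊗ E_{BO}. -/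
open scoped TensorProduct

/-- Coinciding-roots (long root series) case: under the twisted coproduct `Δ_{EJ}`, the
element `E_{BO} = E + (1/2) v² g⁻¹` is primitive. -/
theorem deformed_carrier_primitive_coinciding_roots
    {A : Type*} [Ring A] [Algebra ℂ A]
    (Δ : A →ₐ[ℂ] A ⊗[ℂ] A)
    (E v g h gi hi : A)
    (hg : g * gi = 1) (hg' : gi * g = 1)
    (hh : h * hi = 1) (hh' : hi * h = 1)
    (hsq : h ^ 2 = g)
    (hvg : v * g = g * v) (hvh : v * h = h * v)
    (hΔg : Δ g = g ⊗ₜ[ℂ] g)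
    (hΔv : Δ v = v ⊗ₜ[ℂ] h + g ⊗ₜ[ℂ] v)
    (hΔE : Δ E = E ⊗ₜ[ℂ] 1 + 1 ⊗ₜ[ℂ] E - v ⊗ₜ[ℂ] (v * hi)
        - ((1 : ℂ) / 2) • ((g - 1) ⊗ₜ[ℂ] (v ^ 2 * gi))) :
    Δ (E + ((1 : ℂ) / 2) • (v ^ 2 * gi))
      = (E + ((1 : ℂ) / 2) • (v ^ 2 * gi)) ⊗ₜ[ℂ] 1
        + 1 ⊗ₜ[ℂ] (E + ((1 : ℂ) / 2) • (v ^ 2 * gi)) := by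
  -- gi = hi * hi
  have hgi : gi = hi * hi := by
    have hg2 : h * h = g := by rw [← pow_two, hsq]
    have h1 : hi * hi * g = 1 := by
      rw [← hg2, mul_assoc, ← mul_assoc hi h h, hh', one_mul, hh']
    calc gi = 1 * gi := (one_mul gi).symm
      _ = hi * hi * g * gi := by rw [h1]
      _ = hi * hi * (g * gi) := by rw [mul_assoc]
      _ = hi * hi := by rw [hg, mul_one]
  have hvhi : v * hi = hi * v := by
    calc v * hi = hi * h * (v * hi) := by rw [hh', one_mul]
      _ = hi * (h * v) * hi := by noncomm_ring
      _ = hi * (v * h) * hi := by rw [hvh]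
      _ = hi * v * (h * hi) := by noncomm_ring
      _ = hi * v := by rw [hh, mul_one]
  have hvgi : v * gi = gi * v := by
    rw [hgi, ← mul_assoc, hvhi, mul_assoc, hvhi, mul_assoc]
  have hhgi : h * gi = hi := by
    rw [hgi, ← mul_assoc, hh, one_mul]
  -- Δ gi = gi ⊗ gi
  have hΔgi : Δ gi = gi ⊗ₜ[ℂ] gi := by
    have h2 : (g ⊗ₜ[ℂ] g) * (gi ⊗ₜ[ℂ] gi) = 1 := by
      rw [Algebra.TensorProduct.tmul_mul_tmul, hg, Algebra.TensorProduct.one_def]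
    calc Δ gi = Δ gi * ((g ⊗ₜ[ℂ] g) * (gi ⊗ₜ[ℂ] gi)) := by rw [h2, mul_one]
      _ = Δ gi * Δ g * (gi ⊗ₜ[ℂ] gi) := by rw [hΔg, mul_assoc]
      _ = Δ (gi * g) * (gi ⊗ₜ[ℂ] gi) := by rw [map_mul]
      _ = gi ⊗ₜ[ℂ] gi := by rw [hg', map_one, one_mul]
  -- key product simplifications in A
  have e1 : v * (v * gi) = v ^ 2 * gi := by rw [pow_two, mul_assoc]
  have e2 : h * (h * gi) = 1 := by
    rw [hhgi, hh]
  have e3 : v * (g * gi) = v := by rw [hg, mul_one]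
  have e4 : h * (v * gi) = v * hi := by rw [hvgi, ← mul_assoc, hhgi, ← hvhi]
  have e5 : g * (v * gi) = v := by rw [hvgi, ← mul_assoc, hg, one_mul]
  have e6 : v * (h * gi) = v * hi := by rw [hhgi]
  have e7 : g * (g * gi) = g := by rw [hg, mul_one]
  -- compute Δ of v^2 * gi
  have hΔsq : Δ (v ^ 2 * gi)
      = (v ^ 2 * gi) ⊗ₜ[ℂ] 1 + v ⊗ₜ[ℂ] (v * hi) + v ⊗ₜ[ℂ] (v * hi) + g ⊗ₜ[ℂ] (v ^ 2 * gi) := by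
    rw [map_mul, map_pow, hΔv, hΔgi, pow_two]
    simp only [add_mul, mul_add, Algebra.TensorProduct.tmul_mul_tmul, mul_assoc,
      e1, e2, e3, e4, e5, e6, e7]
    match_scalars <;> ring
  rw [map_add, map_smul, hΔE, hΔsq]
  simp only [TensorProduct.tmul_add, TensorProduct.add_tmul, TensorProduct.sub_tmul, TensorProduct.tmul_sub, smul_add, smul_sub]
  simp only [TensorProduct.tmul_smul, ← TensorProduct.smul_tmul']
  module
end

section
/- With M_{jk} := e_{jk} − e_{kj} in Mat(5,ℂ) and H₊ := −(i/2)(M₁₂ + M₃₄), H₋ := −(i/2)(M₁₂ − M₃₄), E₊ := (1/2)(−M₂₄ + iM₂₃ + iM₁₄ + M₁₃), E₋ := (1/2)(−M₂₄ − iM₂₃ + iM₁₄ − M₁₃), E₁ := (1/√2)(M₂₅ − iM₁₅), E₂ := (1/√2)(M₄₅ − iM₃₅), the following commutation relations hold: [E₁, E₂] = E₊, [E₂, E₋] = E₁, [H₊, E₁] = (1/2)E₁, [H₊, E₂] = (1/2)E₂, [H₋, E₁] = (1/2)E₁, [H₋, E₂] = −(1/2)E₂, [E₊, E₁] = 0,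 [E₊, E₂] = 0, [E₊, E₋] = 0, and [E₋, E₁] = 0. -/
/-!
The Okubo matrices satisfy the `so(n)` relations
`[M i j, M k l] = δ j k • M i l - δ i k • M j l - δ j l • M i k + δ i l • M j k`.
By bilinearity of the bracket each of the ten relations reduces to an identity between linear
combinations of matrix units, with coefficients polynomial in `I` and `c = 1/√2`; these hold
by `I ^ 2 = -1` and `c ^ 2 = 1/2`.
-/

namespace Matrix

section single

variable {l m n α : Type*} [Fintype m] [DecidableEq l] [DecidableEq m] [DecidableEq n]
  [NonUnitalNonAssocSemiring α]

theorem single_mul_single (i : l) (j k : m) (o : n) (a b : α) :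
    single i j a * single k o b = if j = k then single i o (a * b) else 0 := by
  split_ifs with h
  · subst h
    exact single_mul_single_same a i j o b
  · exact single_mul_single_of_ne a i j k h b

end single

section okubo

variable {n : Type*} [DecidableEq n] {R : Type*} [CommRing R]

variable (R) in
def okubo (j k : n) : Matrix n n R :=
  single j k 1 - single k j 1

theorem okubo_lie_okubo [Fintype n] (i j k l : n) :
    ⁅okubo R i j, okubo R k l⁆ =
      (if j = k then okubo R i l else 0) - (if i = k then okubo R j l else 0)
        - (if j = l then okubo R i k else 0) + (if i = l then okubo R j k else 0) := by
  simp only [Ring.lie_def, okubo, sub_mul, mul_sub, single_mul_single, mul_one]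
  split_ifs <;> subst_vars <;> first | contradiction | abel

end okubo

end Matrix

open Matrix

attribute [local instance] LieRing.ofAssociativeRing

/-- Normalized structure relations of the 6-dimensional carrier algebra `L⁽⁶⁾ ⊂ so(5)` in
its defining representation. -/
theorem so5_carrier_structure_relations :
    let M : Fin 5 → Fin 5 → Matrix (Fin 5) (Fin 5) ℂ :=
      fun j k => Matrix.single j k 1 - Matrix.single k j 1
    let Hp : Matrix (Fin 5) (Fin 5) ℂ := (-(Complex.I / 2)) • (M 0 1 + M 2 3)
    let Hm : Matrix (Fin 5) (Fin 5) ℂ := (-(Complex.I / 2)) • (M 0 1 - M 2 3)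
    let Ep : Matrix (Fin 5) (Fin 5) ℂ :=
      ((1 : ℂ) / 2) • (-(M 1 3) + Complex.I • M 1 2 + Complex.I • M 0 3 + M 0 2)
    let Em : Matrix (Fin 5) (Fin 5) ℂ :=
      ((1 : ℂ) / 2) • (-(M 1 3) - Complex.I • M 1 2 + Complex.I • M 0 3 - M 0 2)
    let E1 : Matrix (Fin 5) (Fin 5) ℂ :=
      ((1 : ℂ) / (Real.sqrt 2 : ℂ)) • (M 1 4 - Complex.I • M 0 4)
    let E2 : Matrix (Fin 5) (Fin 5) ℂ :=
      ((1 : ℂ) / (Real.sqrt 2 : ℂ)) • (M 3 4 - Complex.I • M 2 4)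
    E1 * E2 - E2 * E1 = Ep ∧
    E2 * Em - Em * E2 = E1 ∧
    Hp * E1 - E1 * Hp = ((1 : ℂ) / 2) • E1 ∧
    Hp * E2 - E2 * Hp = ((1 : ℂ) / 2) • E2 ∧
    Hm * E1 - E1 * Hm = ((1 : ℂ) / 2) • E1 ∧
    Hm * E2 - E2 * Hm = -(((1 : ℂ) / 2) • E2) ∧
    Ep * E1 - E1 * Ep = 0 ∧
    Ep * E2 - E2 * Ep = 0 ∧
    Ep * Em - Em * Ep = 0 ∧
    Em * E1 - E1 * Em = 0 := by
  intro M Hp Hm Ep Em E1 E2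
  have hM : M = okubo ℂ := rfl
  have hc : (1 / (√2 : ℂ)) ^ 2 = 1 / 2 := by
    rw [div_pow, ← Complex.ofReal_pow, Real.sq_sqrt zero_le_two]
    norm_num
  simp only [← Ring.lie_def]
  simp only [Hp, Hm, Ep, Em, E1, E2, hM, lie_add, add_lie, lie_sub, sub_lie, lie_smul, smul_lie,
    lie_neg, neg_lie, okubo_lie_okubo, Fin.reduceEq, if_true, if_false]
  -- the `okubo ℂ j k` are not linearly independent (`okubo ℂ k j = -okubo ℂ j k`); matrix units are
  simp only [okubo]
  generalize 1 / (√2 : ℂ) = c at hc ⊢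
  refine ⟨?_, ?_, ?_, ?_, ?_, ?_, ?_, ?_, ?_, ?_⟩ <;> match_scalars <;> grind [Complex.I_sq]
end
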